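/- arXiv:1112.2489 — 4 statements merged into one kernel-verified Lean document; each statement's English description precedes it below -/
import Mathlib

section
/- Let A = ℂ[X₁,…,Xₙ], f ∈ A squarefree with A/(f) smooth. Then there exists an injective ℂ-algebra homomorphism ψ : A/(f) → Â, where Â is the completion of A with respect to the principal ideal (f), such that the composition of ψ with the canonical projection Â → A/(f) is the identity. -/
/-!
Smoothness and the Nullstellensatz give `a * f + ∑ bᵢ ∂ᵢf = 1`. The Newton substitution
`Xᵢ ↦ Xᵢ - bᵢ f` is the identity modulo `f` and, by first-order Taylor expansion, sends `f` to
`a f²` modulo `(f)²`; hence it induces a section of `A/(f²) → A/(f)`, i.e. `A/(f)` is formally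
smooth. Formal smoothness then lifts `A/(f) → A/(f^ν)` step by step through the square-zero
extensions `A/(f^(ν+1)) → A/(f^ν)`, and the compatible lifts form a section of the projection
`Â → A/(f)`, which is injective because it has a left inverse.
-/

open MvPolynomial

/-- The `(f)`-adic completion of a commutative `ℂ`-algebra `A`, realized as the
subalgebra of compatible families in `∀ ν, A ⧸ (f^ν)`. -/
def adicCompl (A : Type) [CommRing A] [Algebra ℂ A] (f : A) :
    Subalgebra ℂ (∀ ν : ℕ, A ⧸ Ideal.span {f ^ ν}) where
  carrier := {x | ∀ ν : ℕ,
    Ideal.Quotient.factor (S := Ideal.span {f ^ (ν + 1)}) (T := Ideal.span {f ^ ν})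
      (Ideal.span_singleton_le_span_singleton.mpr (pow_dvd_pow f (Nat.le_succ ν)))
      (x (ν + 1)) = x ν}
  mul_mem' := by
    intro a b ha hb ν
    simp only [Pi.mul_apply, map_mul, ha ν, hb ν]
  add_mem' := by
    intro a b ha hb ν
    simp only [Pi.add_apply, map_add, ha ν, hb ν]
  algebraMap_mem' := fun r ν => rfl

def adicComplProj (A : Type) [CommRing A] [Algebra ℂ A] (f : A) :
    adicCompl A f →+* A ⧸ Ideal.span {f} :=
  (Ideal.Quotient.factor (S := Ideal.span {f ^ 1}) (T := Ideal.span {f})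
      (le_of_eq (by rw [pow_one]))).comp
    ((Pi.evalRingHom _ 1).comp (adicCompl A f).val.toRingHom)

theorem MvPolynomial.aeval_X_add_sub_sub_sum_pderiv_mem_sq {R σ : Type*} [CommRing R]
    [Fintype σ] {I : Ideal (MvPolynomial σ R)}
    {d : σ → MvPolynomial σ R} (hd : ∀ i, d i ∈ I) (p : MvPolynomial σ R) :
    aeval (fun i => X i + d i) p - p - ∑ i, d i * pderiv i p ∈ I ^ 2 := by
  induction p using MvPolynomial.induction_on with
  | C a => simp
  | add p q hp hq =>
    convert add_mem hp hq using 1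
    simp only [map_add, mul_add, Finset.sum_add_distrib]
    ring
  | mul_X p i hp =>
    classical
    have hsum : ∑ j, d j * pderiv j (p * X i) = X i * ∑ j, d j * pderiv j p + d i * p := by
      simp only [mul_comm p, Derivation.leibniz, smul_eq_mul, pderiv_X, Pi.single_apply, ite_mul,
        one_mul, zero_mul, add_comm, mul_add, mul_ite, mul_zero, Finset.sum_add_distrib,
        Finset.sum_ite_eq, Finset.mem_univ, ↓reduceIte, Finset.mul_sum, mul_left_comm]
    have hdd : d i * ∑ j, d j * pderiv j p ∈ I ^ 2 :=
      sq I ▸ Ideal.mul_mem_mul (hd i) (Ideal.sum_mem _ fun j _ => Ideal.mul_mem_right _ _ (hd j))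
    convert add_mem (Ideal.mul_mem_left _ (X i + d i) hp) hdd using 1
    rw [map_mul, aeval_X, hsum]
    ring

theorem MvPolynomial.exists_mul_add_sum_mul_pderiv_eq_one {k σ : Type*} [Field k] [IsAlgClosed k]
    [Fintype σ] (f : MvPolynomial σ k)
    (hsm : ∀ x : σ → k, ¬ (eval x f = 0 ∧ ∀ i, eval x (pderiv i f) = 0)) :
    ∃ (a : MvPolynomial σ k) (b : σ → MvPolynomial σ k), a * f + ∑ i, b i * pderiv i f = 1 := by
  set J := Ideal.span (Set.range fun i => pderiv i f)
  have hzero : zeroLocus k (Ideal.span {f} ⊔ J) = ∅ := by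
    refine Set.eq_empty_of_forall_notMem fun x hx => hsm x ⟨?_, fun i => ?_⟩
    · exact (mem_zeroLocus_iff.mp hx) f (Ideal.mem_sup_left (Ideal.mem_span_singleton_self f))
    · exact (mem_zeroLocus_iff.mp hx) _ (Ideal.mem_sup_right (Ideal.subset_span ⟨i, rfl⟩))
  have htop : Ideal.span {f} ⊔ J = ⊤ := by
    rw [← Ideal.radical_eq_top, ← vanishingIdeal_zeroLocus_eq_radical (K := k), hzero,
      vanishingIdeal_empty]
  obtain ⟨_, hf, g, hg, hsum⟩ := Submodule.mem_sup.mp (htop ▸ Submodule.mem_top (x := 1))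
  obtain ⟨a, rfl⟩ := Ideal.mem_span_singleton'.mp hf
  obtain ⟨b, rfl⟩ := (Submodule.mem_span_range_iff_exists_fun _).mp hg
  exact ⟨a, b, by simpa using hsum⟩

theorem Algebra.FormallySmooth.quotient_of_map_mem_sq {R P : Type*} [CommRing R] [CommRing P]
    [Algebra R P] [Algebra.FormallySmooth R P] (I : Ideal P) (φ : P →ₐ[R] P)
    (hφI : ∀ p ∈ I, φ p ∈ I ^ 2)
    (hφ : (Ideal.Quotient.mkₐ R I).comp φ = Ideal.Quotient.mkₐ R I) :
    Algebra.FormallySmooth R (P ⧸ I) := by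
  have hker : RingHom.ker (Ideal.Quotient.mkₐ R I).toRingHom = I := Ideal.Quotient.mkₐ_ker R I
  refine .of_split (Ideal.Quotient.mkₐ R I) (Ideal.Quotient.liftₐ I
    ((Ideal.Quotient.mkₐ R _).comp φ) fun p hp => Ideal.Quotient.eq_zero_iff_mem.mpr
      (by rw [hker]; exact hφI p hp)) ?_
  exact Ideal.Quotient.algHom_ext R hφ

theorem MvPolynomial.formallySmooth_quotient_span_singleton {R σ : Type*} [CommRing R] [Fintype σ]
    {f a : MvPolynomial σ R} {b : σ → MvPolynomial σ R}
    (hab : a * f + ∑ i, b i * pderiv i f = 1) :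
    Algebra.FormallySmooth R (MvPolynomial σ R ⧸ Ideal.span {f}) := by
  set I := Ideal.span {f}
  set d : σ → MvPolynomial σ R := fun i => -(b i * f)
  have hd : ∀ i, d i ∈ I := fun i =>
    I.neg_mem_iff.mpr (Ideal.mul_mem_left _ _ (Ideal.mem_span_singleton_self f))
  have hf : aeval (fun i => X i + d i) f ∈ I ^ 2 := by
    have hfirst_order : f + ∑ i, d i * pderiv i f = a * f * f := by
      simp only [d, neg_mul, Finset.sum_neg_distrib, mul_right_comm _ f, ← Finset.sum_mul]
      linear_combination (-f) * hab
    have hff : a * f * f ∈ I ^ 2 := sq I ▸ Ideal.mul_mem_mul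
      (Ideal.mul_mem_left _ a (Ideal.mem_span_singleton_self f)) (Ideal.mem_span_singleton_self f)
    convert add_mem (aeval_X_add_sub_sub_sum_pderiv_mem_sq hd f) hff using 1
    rw [← hfirst_order]
    ring
  refine Algebra.FormallySmooth.quotient_of_map_mem_sq I (aeval fun i => X i + d i) ?_ ?_
  · intro p hp
    obtain ⟨c, rfl⟩ := Ideal.mem_span_singleton'.mp hp
    rw [map_mul]
    exact Ideal.mul_mem_left _ _ hf
  · refine MvPolynomial.algHom_ext fun i => ?_
    simpa [Ideal.Quotient.eq_zero_iff_mem] using hd i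

theorem Ideal.Quotient.isNilpotent_ker_factor {A : Type*} [CommRing A] {S T : Ideal A}
    (H : S ≤ T) (hT : T ^ 2 ≤ S) : IsNilpotent (RingHom.ker (Ideal.Quotient.factor H)) := by
  refine ⟨2, ?_⟩
  rw [Ideal.Quotient.factor_ker, ← Ideal.map_pow, Ideal.zero_eq_bot, eq_bot_iff]
  exact (Ideal.map_mono hT).trans (Ideal.map_quotient_self S).le

theorem Ideal.span_singleton_pow_le_span_singleton_pow {A : Type*} [CommSemiring A] (f : A)
    {m n : ℕ} (h : m ≤ n) : Ideal.span {f ^ n} ≤ Ideal.span {f ^ m} :=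
  Ideal.span_singleton_le_span_singleton.mpr (pow_dvd_pow f h)

section Completion

open Ideal.Quotient

variable {A : Type} [CommRing A] [Algebra ℂ A] (f : A)
  [Algebra.FormallySmooth ℂ (A ⧸ Ideal.span {f})]

-- Shifted by one: `A/(f) → A/(f⁰) = 0` is not a nilpotent thickening, so lifting starts at `f¹`.
noncomputable def liftPowSucc : ∀ ν : ℕ, (A ⧸ Ideal.span {f}) →ₐ[ℂ] A ⧸ Ideal.span {f ^ (ν + 1)}
  | 0 => factorₐ ℂ (by rw [pow_one])
  | ν + 1 =>
    have H := Ideal.span_singleton_pow_le_span_singleton_pow f (ν + 1).le_succ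
    Algebra.FormallySmooth.liftOfSurjective (liftPowSucc ν) (factorₐ ℂ H) (factor_surjective H)
      (isNilpotent_ker_factor H <| by
        rw [Ideal.span_singleton_pow, ← pow_mul]
        exact Ideal.span_singleton_pow_le_span_singleton_pow f (by omega))

theorem factor_liftPowSucc_succ (ν : ℕ) (x : A ⧸ Ideal.span {f}) :
    factor (Ideal.span_singleton_pow_le_span_singleton_pow f (ν + 1).le_succ)
      (liftPowSucc f (ν + 1) x) = liftPowSucc f ν x := by
  rw [liftPowSucc, ← factorₐ_apply ℂ]
  exact Algebra.FormallySmooth.liftOfSurjective_apply _ _ _ _ x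

noncomputable def adicComplSection : (A ⧸ Ideal.span {f}) →ₐ[ℂ] adicCompl A f :=
  (AlgHom.pi fun ν => (factorₐ ℂ (Ideal.span_singleton_pow_le_span_singleton_pow f
    ν.le_succ)).comp (liftPowSucc f ν)).codRestrict (adicCompl A f) fun x ν => by
      simp only [AlgHom.pi_apply, AlgHom.comp_apply, factorₐ_apply]
      rw [factor_liftPowSucc_succ]

theorem adicComplSection_apply (x : A ⧸ Ideal.span {f}) (ν : ℕ) :
    (adicComplSection f x : ∀ ν, A ⧸ Ideal.span {f ^ ν}) ν =
      factor (Ideal.span_singleton_pow_le_span_singleton_pow f ν.le_succ) (liftPowSucc f ν x) :=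
  rfl

theorem adicComplProj_comp_adicComplSection :
    (adicComplProj A f).comp (adicComplSection f).toRingHom = RingHom.id _ := by
  ext x
  simp only [adicComplProj, AlgHom.toRingHom_eq_coe, RingHom.coe_comp,
    RingHom.coe_coe, Subalgebra.coe_val, Function.comp_apply, Pi.evalRingHom_apply]
  rw [adicComplSection_apply, factor_liftPowSucc_succ]
  rfl

end Completion

theorem section_of_projection_to_completion_general
    (n : ℕ) (f : MvPolynomial (Fin n) ℂ)
    (hsm : ∀ x : Fin n → ℂ,
      ¬ (eval x f = 0 ∧ ∀ i : Fin n, eval x (pderiv i f) = 0)) :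
    ∃ ψ : (MvPolynomial (Fin n) ℂ ⧸ Ideal.span {f}) →ₐ[ℂ]
        adicCompl (MvPolynomial (Fin n) ℂ) f,
      Function.Injective ψ ∧
      (adicComplProj (MvPolynomial (Fin n) ℂ) f).comp ψ.toRingHom = RingHom.id _ := by
  obtain ⟨a, b, hab⟩ := exists_mul_add_sum_mul_pderiv_eq_one f hsm
  have := formallySmooth_quotient_span_singleton hab
  have hsplit := adicComplProj_comp_adicComplSection f
  exact ⟨adicComplSection f, Function.LeftInverse.injective (g := adicComplProj _ f)
    (RingHom.congr_fun hsplit), hsplit⟩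

/-- Corollary 3.4 (existence part): for squarefree `f` with `A/(f)` smooth there is an
injective `ℂ`-algebra homomorphism `ψ : A/(f) → Â` splitting the canonical projection. -/
theorem section_of_projection_to_completion
    (n : ℕ) (f : MvPolynomial (Fin n) ℂ) (hsf : Squarefree f)
    (hsm : ∀ x : Fin n → ℂ,
      ¬ (eval x f = 0 ∧ ∀ i : Fin n, eval x (pderiv i f) = 0)) :
    ∃ ψ : (MvPolynomial (Fin n) ℂ ⧸ Ideal.span {f}) →ₐ[ℂ]
        adicCompl (MvPolynomial (Fin n) ℂ) f,
      Function.Injective ψ ∧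
      (adicComplProj (MvPolynomial (Fin n) ℂ) f).comp ψ.toRingHom = RingHom.id _ :=
  section_of_projection_to_completion_general n f hsm
end

section
/- Let A = ℂ[X₁,…,Xₙ], f ∈ A squarefree with B = A/(f) smooth, and let ψ : B → Â be a ring section of the projection Â → B, where Â is the (f)-adic completion of A. Then the map ψ̂ : B[[T]] → Â defined by ∑ν bν T^ν ↦ ∑ν ψ(bν) f^ν is a ring isomorphism. -/
/-!
Modulo `f ^ ν` the series `∑ ψ(b μ) * f ^ μ` is the finite sum over `μ < ν`, and truncation below
degree `ν` is multiplicative up to `T ^ ν`; so `ψ̂` is a ring map. As `f` is a non-zero-divisor,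
so is its image in `Â`, and the kernel of `Â → A ⧸ (f)` is `f * Â`. Hence
`ψ̂ (T ^ k * h) = f ^ k * ψ̂ h` shows that every power of `T` divides an element of `ker ψ̂`, and
iterating `x = ψ (x mod f) + f * x'` expands every `x ∈ Â` as `ψ̂` of a power series.
-/

open MvPolynomial

namespace PowerSeries

variable {R S : Type*} [CommRing R] [CommRing S]

theorem eval₂_trunc_coe_of_pow_eq_zero (σ : R →+* S) {c : S} {n : ℕ} (hc : c ^ n = 0)
    (p : Polynomial R) : (trunc n (p : R⟦X⟧)).eval₂ σ c = p.eval₂ σ c := by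
  obtain ⟨q, hq⟩ : Polynomial.X ^ n ∣ p - trunc n (p : R⟦X⟧) :=
    Polynomial.X_pow_dvd_iff.2 fun d hd => by simp [coeff_trunc, hd]
  rw [sub_eq_iff_eq_add'] at hq
  conv_rhs => rw [hq]
  rw [Polynomial.eval₂_add, Polynomial.eval₂_mul, Polynomial.eval₂_X_pow, hc, zero_mul,
    add_zero]

noncomputable def truncEval₂ (σ : R →+* S) {c : S} {n : ℕ} (hc : c ^ n = 0) :
    R⟦X⟧ →+* S where
  toFun g := (trunc n g).eval₂ σ c
  map_one' := by simpa using eval₂_trunc_coe_of_pow_eq_zero σ hc 1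
  map_mul' g h := by
    simpa [trunc_trunc_mul_trunc] using
      eval₂_trunc_coe_of_pow_eq_zero σ hc (trunc n g * trunc n h)
  map_zero' := by simp
  map_add' g h := by simp [Polynomial.eval₂_add]

theorem truncEval₂_apply (σ : R →+* S) {c : S} {n : ℕ} (hc : c ^ n = 0) (g : R⟦X⟧) :
    truncEval₂ σ hc g = ∑ μ ∈ Finset.range n, σ (coeff μ g) * c ^ μ :=
  eval₂_trunc_eq_sum_range c σ n g

theorem _root_.RingHom.comp_truncEval₂ {S' : Type*} [CommRing S'] (φ : S →+* S')
    {σ : R →+* S} {σ' : R →+* S'} {c : S} {c' : S'} {m n : ℕ} (hc : c ^ n = 0)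
    (hc' : c' ^ m = 0)
    (hσ : φ.comp σ = σ') (hcc' : φ c = c') (hmn : m ≤ n) :
    φ.comp (truncEval₂ σ hc) = truncEval₂ σ' hc' := by
  ext g
  simp only [RingHom.comp_apply, truncEval₂, RingHom.coe_mk, MonoidHom.coe_mk, OneHom.coe_mk,
    Polynomial.hom_eval₂, hσ, hcc']
  rw [← eval₂_trunc_coe_of_pow_eq_zero σ' hc', trunc_trunc_of_le g hmn]

end PowerSeries

namespace adicCompl

open Ideal.Quotient

variable {A : Type} [CommRing A] {f : A}

variable (f) in
def transition (ν : ℕ) : A ⧸ Ideal.span {f ^ (ν + 1)} →+* A ⧸ Ideal.span {f ^ ν} :=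
  factor (Ideal.span_singleton_le_span_singleton.mpr (pow_dvd_pow f (Nat.le_succ ν)))

@[simp]
theorem transition_mk (ν : ℕ) (r : A) : transition f ν (mk _ r) = mk _ r :=
  factor_mk _ r

theorem mk_self_pow_eq_zero (ν : ℕ) : mk (Ideal.span {f ^ ν}) f ^ ν = 0 := by
  rw [← map_pow, eq_zero_iff_mem]
  exact Ideal.mem_span_singleton_self _

theorem mk_eq_mk_of_mk_mul_eq (hf : IsLeftRegular f) {ν : ℕ} {a b : A}
    (h : mk (Ideal.span {f ^ (ν + 1)}) (f * a) = mk _ (f * b)) :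
    mk (Ideal.span {f ^ ν}) a = mk _ b := by
  rw [Ideal.Quotient.eq, Ideal.mem_span_singleton, ← mul_sub, pow_succ'] at h
  rwa [Ideal.Quotient.eq, Ideal.mem_span_singleton, ← hf.dvd_cancel_left]

variable [Algebra ℂ A]

theorem transition_val (x : adicCompl A f) (ν : ℕ) :
    transition f ν (x.val (ν + 1)) = x.val ν :=
  x.2 ν

theorem ext_succ {x y : adicCompl A f} (h : ∀ ν, x.val (ν + 1) = y.val (ν + 1)) : x = y := by
  ext ν : 2
  rw [← transition_val x, ← transition_val y, h]

variable (f) in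
def eval (ν : ℕ) : adicCompl A f →+* A ⧸ Ideal.span {f ^ ν} :=
  (Pi.evalRingHom _ ν).comp (adicCompl A f).val.toRingHom

theorem transition_comp_eval (ν : ℕ) : (transition f ν).comp (eval f (ν + 1)) = eval f ν :=
  RingHom.ext fun x => transition_val x ν

def lift {R : Type*} [Semiring R] (φ : ∀ ν, R →+* A ⧸ Ideal.span {f ^ ν})
    (hφ : ∀ ν, (transition f ν).comp (φ (ν + 1)) = φ ν) : R →+* adicCompl A f :=
  (RingHom.pi φ).codRestrict (adicCompl A f) fun r ν => RingHom.congr_fun (hφ ν) r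

variable (f) in
def of : A →+* adicCompl A f :=
  lift (fun _ => mk _) fun _ => factor_comp_mk _

@[simp]
theorem of_val (r : A) (ν : ℕ) : (of f r).val ν = mk _ r := rfl

theorem adicComplProj_eq_mk {x : adicCompl A f} {ν : ℕ} {r : A}
    (h : x.val (ν + 1) = mk _ r) : adicComplProj A f x = mk _ r := by
  induction ν with
  | zero => exact (congrArg (factor (by simp)) h).trans (factor_mk _ r)
  | succ ν ih => exact ih (by rw [← transition_val, h, transition_mk])

theorem isLeftRegular_of (hf : IsLeftRegular f) : IsLeftRegular (of f f) := by
  intro y z h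
  ext ν : 2
  obtain ⟨a, ha⟩ := mk_surjective (y.val (ν + 1))
  obtain ⟨b, hb⟩ := mk_surjective (z.val (ν + 1))
  have hab := congrArg (fun w => w.val (ν + 1)) h
  simp only [Subalgebra.coe_mul, Pi.mul_apply, of_val, ← ha, ← hb, ← map_mul] at hab
  rw [← transition_val y, ← transition_val z, ← ha, ← hb, transition_mk, transition_mk]
  exact mk_eq_mk_of_mk_mul_eq hf hab

theorem of_dvd_of_adicComplProj_eq_zero (hf : IsLeftRegular f) {z : adicCompl A f}
    (hz : adicComplProj A f z = 0) : of f f ∣ z := by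
  have hdvd : ∀ ν, ∃ s, z.val (ν + 1) = mk _ (f * s) := by
    intro ν
    obtain ⟨r, hr⟩ := mk_surjective (z.val (ν + 1))
    have hfr : f ∣ r := by
      rw [← Ideal.mem_span_singleton, ← eq_zero_iff_mem, ← adicComplProj_eq_mk hr.symm, hz]
    obtain ⟨s, rfl⟩ := hfr
    exact ⟨s, hr.symm⟩
  choose s hs using hdvd
  have hs' : ∀ ν, z.val (ν + 1) = mk _ (f * s (ν + 1)) := fun ν => by
    rw [← transition_val z, hs, transition_mk]
  refine ⟨⟨fun ν => mk _ (s ν), fun ν => ?_⟩, ext_succ fun ν => ?_⟩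
  · exact (transition_mk ν _).trans (mk_eq_mk_of_mk_mul_eq hf ((hs' ν).symm.trans (hs ν)))
  · simp [hs' ν]

section powerSeriesHom

open PowerSeries

variable (ψ : (A ⧸ Ideal.span {f}) →+* adicCompl A f)

/-- The map `ψ̂ : ∑ b μ * T ^ μ ↦ ∑ ψ (b μ) * f ^ μ`, computed modulo each `f ^ ν`. -/
noncomputable def powerSeriesHom : PowerSeries (A ⧸ Ideal.span {f}) →+* adicCompl A f :=
  lift (fun ν => truncEval₂ ((eval f ν).comp ψ) (mk_self_pow_eq_zero ν)) fun ν =>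
    (transition f ν).comp_truncEval₂ _ _ (by rw [← RingHom.comp_assoc, transition_comp_eval])
      (transition_mk ν f) (Nat.le_succ ν)

theorem powerSeriesHom_val (g : PowerSeries (A ⧸ Ideal.span {f})) (ν : ℕ) :
    (powerSeriesHom ψ g).val ν =
      ∑ μ ∈ Finset.range ν, (ψ (coeff μ g)).val ν * mk (Ideal.span {f ^ ν}) f ^ μ :=
  truncEval₂_apply _ (mk_self_pow_eq_zero ν) g

theorem powerSeriesHom_X : powerSeriesHom ψ PowerSeries.X = of f f := by
  refine ext_succ fun ν => ?_
  have hterm : ∀ μ, (ψ (coeff μ PowerSeries.X)).val (ν + 1) * mk _ f ^ μ =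
      if μ = 1 then mk (Ideal.span {f ^ (ν + 1)}) f else 0 := by
    intro μ
    split_ifs with h <;> simp [PowerSeries.coeff_X, h]
  simp only [powerSeriesHom_val, hterm, Finset.sum_ite_eq', Finset.mem_range, of_val]
  split_ifs with h
  · rfl
  · rw [eq_comm, eq_zero_iff_mem, show ν = 0 by omega, zero_add, pow_one]
    exact Ideal.mem_span_singleton_self f

theorem adicComplProj_powerSeriesHom (hψ : (adicComplProj A f).comp ψ = RingHom.id _)
    (g : PowerSeries (A ⧸ Ideal.span {f})) :
    adicComplProj A f (powerSeriesHom ψ g) = constantCoeff g := by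
  have h1 : (powerSeriesHom ψ g).val 1 = (ψ (constantCoeff g)).val 1 := by
    simp [powerSeriesHom_val]
  exact (congrArg (factor (by simp)) h1).trans (RingHom.congr_fun hψ _)

theorem powerSeriesHom_injective (hf : IsLeftRegular f)
    (hψ : (adicComplProj A f).comp ψ = RingHom.id _) :
    Function.Injective (powerSeriesHom ψ) := by
  refine (injective_iff_map_eq_zero _).2 fun g hg => ?_
  have hdvd : ∀ k, PowerSeries.X ^ k ∣ g := by
    intro k
    induction k with
    | zero => exact one_dvd g
    | succ k ih =>
      obtain ⟨h, rfl⟩ := ih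
      have hh : powerSeriesHom ψ h = 0 := by
        apply (isLeftRegular_of hf).pow k
        dsimp only
        rwa [mul_zero, ← powerSeriesHom_X, ← map_pow, ← map_mul]
      have hX : PowerSeries.X ∣ h := by
        rw [X_dvd_iff, ← adicComplProj_powerSeriesHom ψ hψ, hh, map_zero]
      rw [pow_succ]
      exact mul_dvd_mul_left _ hX
  ext k
  simpa using X_pow_dvd_iff.1 (hdvd (k + 1)) k (Nat.lt_succ_self k)

theorem exists_eq_section_add_mul (hf : IsLeftRegular f)
    (hψ : (adicComplProj A f).comp ψ = RingHom.id _) (x : adicCompl A f) :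
    ∃ y, x = ψ (adicComplProj A f x) + of f f * y := by
  have hker : adicComplProj A f (x - ψ (adicComplProj A f x)) = 0 := by
    rw [map_sub, ← RingHom.comp_apply, hψ, RingHom.id_apply, sub_self]
  obtain ⟨y, hy⟩ := of_dvd_of_adicComplProj_eq_zero hf hker
  exact ⟨y, eq_add_of_sub_eq' hy⟩

theorem powerSeriesHom_surjective (hf : IsLeftRegular f)
    (hψ : (adicComplProj A f).comp ψ = RingHom.id _) :
    Function.Surjective (powerSeriesHom ψ) := by
  intro x
  choose step hstep using exists_eq_section_add_mul ψ hf hψ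
  set b := fun μ => adicComplProj A f (step^[μ] x)
  have hx : ∀ ν,
      x = ∑ μ ∈ Finset.range ν, ψ (b μ) * of f f ^ μ + of f f ^ ν * step^[ν] x := by
    intro ν
    induction ν with
    | zero => simp
    | succ ν ih =>
      rw [Finset.sum_range_succ, Function.iterate_succ_apply']
      linear_combination ih + of f f ^ ν * hstep (step^[ν] x)
  refine ⟨PowerSeries.mk b, Subtype.ext (funext fun ν => ?_)⟩
  rw [powerSeriesHom_val]
  conv_rhs => rw [hx ν]
  simp [mk_self_pow_eq_zero]

end powerSeriesHom

end adicCompl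

theorem powerSeries_iso_adicCompletion_general
    (n : ℕ) (f : MvPolynomial (Fin n) ℂ) (hsf : Squarefree f)
    (ψ : (MvPolynomial (Fin n) ℂ ⧸ Ideal.span {f}) →+*
        adicCompl (MvPolynomial (Fin n) ℂ) f)
    (hψ : (adicComplProj (MvPolynomial (Fin n) ℂ) f).comp ψ = RingHom.id _) :
    ∃ Φ : PowerSeries (MvPolynomial (Fin n) ℂ ⧸ Ideal.span {f}) ≃+*
        adicCompl (MvPolynomial (Fin n) ℂ) f,
      ∀ (g : PowerSeries (MvPolynomial (Fin n) ℂ ⧸ Ideal.span {f})) (ν : ℕ),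
        (Φ g).val ν = ∑ μ ∈ Finset.range ν,
          (ψ (PowerSeries.coeff μ g)).val ν *
            (Ideal.Quotient.mk (Ideal.span {f ^ ν}) f) ^ μ := by
  have hf : IsLeftRegular f := (IsRegular.of_ne_zero hsf.ne_zero).left
  exact ⟨RingEquiv.ofBijective (adicCompl.powerSeriesHom ψ)
      ⟨adicCompl.powerSeriesHom_injective ψ hf hψ,
        adicCompl.powerSeriesHom_surjective ψ hf hψ⟩,
    adicCompl.powerSeriesHom_val ψ⟩

/-- Lemma 3.6 (Grothendieck's lemma, without degree bounds): if `ψ : B → Â` is a ring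
section of the projection `Â → B`, then `∑ν bν T^ν ↦ ∑ν ψ(bν) f^ν` is a ring
isomorphism `B[[T]] ≅ Â`. -/
theorem powerSeries_iso_adicCompletion
    (n : ℕ) (f : MvPolynomial (Fin n) ℂ) (hsf : Squarefree f)
    (hsm : ∀ x : Fin n → ℂ,
      ¬ (eval x f = 0 ∧ ∀ i : Fin n, eval x (pderiv i f) = 0))
    (ψ : (MvPolynomial (Fin n) ℂ ⧸ Ideal.span {f}) →+*
        adicCompl (MvPolynomial (Fin n) ℂ) f)
    (hψ : (adicComplProj (MvPolynomial (Fin n) ℂ) f).comp ψ = RingHom.id _) :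
    ∃ Φ : PowerSeries (MvPolynomial (Fin n) ℂ ⧸ Ideal.span {f}) ≃+*
        adicCompl (MvPolynomial (Fin n) ℂ) f,
      ∀ (g : PowerSeries (MvPolynomial (Fin n) ℂ ⧸ Ideal.span {f})) (ν : ℕ),
        (Φ g).val ν = ∑ μ ∈ Finset.range ν,
          (ψ (PowerSeries.coeff μ g)).val ν *
            (Ideal.Quotient.mk (Ideal.span {f ^ ν}) f) ^ μ :=
  powerSeries_iso_adicCompletion_general n f hsf ψ hψ
end

section
/- Let f = ∏_{i=1}^d (X − ζᵢ) ∈ ℂ[X] with ζᵢ pairwise distinct. Every rational function of the form g/f^s with g ∈ ℂ[X] and s ≥ 1 can be written as h' + ∑_{i=1}^d cᵢ/(X − ζᵢ), where h ∈ ℂ[X]_f is a rational function with poles only at the ζᵢ, h' is its derivative, and cᵢ ∈ ℂ. -/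
/-!
Partial fractions write `g / f ^ s` as a polynomial plus terms `r / (X - ζᵢ) ^ t`. In
characteristic zero every polynomial is a derivative, and expanding `r` around `ζᵢ` reduces
`r / (X - ζᵢ) ^ t` to constants `a / (X - ζᵢ) ^ j`; for `j ≥ 2` these are derivatives of
`-a / ((j - 1) (X - ζᵢ) ^ (j - 1))`, which lies in `K[X]_f` since `X - ζᵢ` divides `f`.
Only the simple fractions `a / (X - ζᵢ)` remain.
-/

open Polynomial Submodule

section
variable {K : Type*} [Field K]

theorem Polynomial.derivative_surjective [CharZero K] :
    Function.Surjective (derivative : K[X] →ₗ[K] K[X]) := by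
  intro g
  induction g using Polynomial.induction_on' with
  | add p q hp hq =>
    obtain ⟨P, rfl⟩ := hp
    obtain ⟨Q, rfl⟩ := hq
    exact ⟨P + Q, map_add _ _ _⟩
  | monomial n a =>
    refine ⟨monomial (n + 1) (a / (n + 1)), ?_⟩
    rw [derivative_monomial_succ, div_mul_cancel₀ _ (Nat.cast_add_one_ne_zero n)]

/-- The derivative of `p / f ^ k`, written by the quotient rule. -/
noncomputable def fracDeriv (f p : K[X]) (k : ℕ) : RatFunc K :=
  algebraMap K[X] (RatFunc K) (derivative p * f ^ k - p * derivative (f ^ k)) /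
    algebraMap K[X] (RatFunc K) f ^ (2 * k)

theorem fracDeriv_zero_right (f p : K[X]) :
    fracDeriv f p 0 = algebraMap K[X] (RatFunc K) (derivative p) := by
  simp [fracDeriv]

theorem fracDeriv_add {f : K[X]} (hf : f ≠ 0) (p q : K[X]) (k m : ℕ) :
    fracDeriv f p k + fracDeriv f q m = fracDeriv f (p * f ^ m + q * f ^ k) (k + m) := by
  have hF := RatFunc.algebraMap_ne_zero hf
  rw [fracDeriv, fracDeriv, fracDeriv, div_add_div _ _ (pow_ne_zero _ hF) (pow_ne_zero _ hF),
    ← pow_add, mul_add, ← map_pow, ← map_pow, ← map_mul, ← map_mul, ← map_add]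
  congr 2
  simp only [pow_add, derivative_mul, derivative_add]
  ring

theorem smul_fracDeriv (c : K) (f p : K[X]) (k : ℕ) :
    c • fracDeriv f p k = fracDeriv f (C c * p) k := by
  rw [fracDeriv, fracDeriv, RatFunc.smul_eq_C_mul, ← RatFunc.algebraMap_C, ← mul_div_assoc,
    ← map_mul, derivative_C_mul]
  ring_nf

noncomputable def fracDerivSubmodule {f : K[X]} (hf : f ≠ 0) : Submodule K (RatFunc K) where
  carrier := {x | ∃ p k, fracDeriv f p k = x}
  zero_mem' := ⟨0, 0, by simp [fracDeriv]⟩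
  add_mem' := by
    rintro _ _ ⟨p, k, rfl⟩ ⟨q, m, rfl⟩
    exact ⟨_, _, (fracDeriv_add hf p q k m).symm⟩
  smul_mem' := by
    rintro c _ ⟨p, k, rfl⟩
    exact ⟨_, _, (smul_fracDeriv c f p k).symm⟩

theorem algebraMap_mem_fracDerivSubmodule [CharZero K] {f : K[X]} (hf : f ≠ 0) (r : K[X]) :
    algebraMap K[X] (RatFunc K) r ∈ fracDerivSubmodule hf := by
  obtain ⟨p, rfl⟩ := derivative_surjective r
  exact ⟨p, 0, fracDeriv_zero_right f p⟩

-- Here `p / f ^ k` is `a / (X - z) ^ (n + 1)`, whatever the cofactor `q`.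
theorem fracDeriv_X_sub_C_mul (z a : K) {q : K[X]} (hq : q ≠ 0) (n : ℕ) :
    fracDeriv ((X - C z) * q) (C a * q ^ (n + 1)) (n + 1) =
      RatFunc.C (-(n + 1) * a) / algebraMap K[X] (RatFunc K) (X - C z) ^ (n + 2) := by
  have hF := RatFunc.algebraMap_ne_zero (mul_ne_zero (X_sub_C_ne_zero z) hq)
  have hD := RatFunc.algebraMap_ne_zero (X_sub_C_ne_zero z)
  have hnum : derivative (C a * q ^ (n + 1)) * ((X - C z) * q) ^ (n + 1)
      - C a * q ^ (n + 1) * derivative (((X - C z) * q) ^ (n + 1))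
      = C (-(n + 1) * a) * ((X - C z) * q) ^ n * q ^ (n + 2) := by
    simp only [derivative_pow, derivative_mul, derivative_sub, derivative_X,
      derivative_C, Nat.add_sub_cancel, C_mul, C_neg, C_add, C_1, map_natCast, mul_pow]
    push_cast
    ring
  rw [fracDeriv, hnum, div_eq_div_iff (pow_ne_zero _ hF) (pow_ne_zero _ hD),
    ← RatFunc.algebraMap_C, ← map_pow, ← map_mul, ← map_pow, ← map_mul]
  congr 1
  simp only [mul_pow]
  ring

theorem C_div_X_sub_C_pow_mem_fracDerivSubmodule [CharZero K] {f : K[X]} (hf : f ≠ 0) {z : K}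
    (hz : X - C z ∣ f) (a : K) (n : ℕ) :
    RatFunc.C a / algebraMap K[X] (RatFunc K) (X - C z) ^ (n + 2) ∈ fracDerivSubmodule hf := by
  obtain ⟨q, rfl⟩ := hz
  have hq : q ≠ 0 := right_ne_zero_of_mul hf
  refine ⟨C (-a / (n + 1)) * q ^ (n + 1), n + 1, ?_⟩
  have hn : (n : K) + 1 ≠ 0 := Nat.cast_add_one_ne_zero n
  rw [fracDeriv_X_sub_C_mul z _ hq, neg_mul, ← mul_neg, neg_div, neg_neg, mul_div_cancel₀ _ hn]

noncomputable def simpleFractions {ι : Type*} (ζ : ι → K) : Submodule K (RatFunc K) :=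
  span K (Set.range fun i => (algebraMap K[X] (RatFunc K) (X - C (ζ i)))⁻¹)

theorem div_X_sub_C_pow_mem_sup [CharZero K] {f : K[X]} (hf : f ≠ 0) {ι : Type*} (ζ : ι → K)
    {i : ι} (hi : X - C (ζ i) ∣ f) (r : K[X]) (t : ℕ) :
    algebraMap K[X] (RatFunc K) r / algebraMap K[X] (RatFunc K) (X - C (ζ i)) ^ t ∈
      fracDerivSubmodule hf ⊔ simpleFractions ζ := by
  set A := algebraMap K[X] (RatFunc K)
  induction t generalizing r with
  | zero => simpa using mem_sup_left (algebraMap_mem_fracDerivSubmodule hf r)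
  | succ t ih =>
    have hr : r = C (r.eval (ζ i)) + (X - C (ζ i)) * (r /ₘ (X - C (ζ i))) := by
      rw [← modByMonic_X_sub_C_eq_C_eval]
      exact (modByMonic_add_div r (X - C (ζ i))).symm
    have hD := RatFunc.algebraMap_ne_zero (X_sub_C_ne_zero (ζ i))
    have hsplit : A r / A (X - C (ζ i)) ^ (t + 1) =
        RatFunc.C (r.eval (ζ i)) / A (X - C (ζ i)) ^ (t + 1) +
          A (r /ₘ (X - C (ζ i))) / A (X - C (ζ i)) ^ t := by
      rw [← RatFunc.algebraMap_C]
      nth_rw 1 [hr]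
      rw [map_add, map_mul, add_div, pow_succ', mul_div_mul_left _ _ hD]
    rw [hsplit]
    refine add_mem ?_ (ih _)
    rcases t with _ | n
    · refine mem_sup_right ?_
      rw [zero_add, pow_one, div_eq_mul_inv, ← RatFunc.smul_eq_C_mul]
      exact smul_mem _ _ (subset_span ⟨i, rfl⟩)
    · exact mem_sup_left (C_div_X_sub_C_pow_mem_fracDerivSubmodule hf hi _ n)

end

theorem partial_fractions_mod_derivatives_general
    (d : ℕ) (ζ : Fin d → ℂ) (hζ : Function.Injective ζ)
    (f : Polynomial ℂ) (hf : f = ∏ i : Fin d, (X - C (ζ i)))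
    (g : Polynomial ℂ) (s : ℕ) :
    ∃ (p : Polynomial ℂ) (k : ℕ) (c : Fin d → ℂ),
      algebraMap (Polynomial ℂ) (RatFunc ℂ) g /
          (algebraMap (Polynomial ℂ) (RatFunc ℂ) f) ^ s =
        algebraMap (Polynomial ℂ) (RatFunc ℂ)
            (derivative p * f ^ k - p * derivative (f ^ k)) /
          (algebraMap (Polynomial ℂ) (RatFunc ℂ) f) ^ (2 * k) +
        ∑ i : Fin d, RatFunc.C (c i) /
          algebraMap (Polynomial ℂ) (RatFunc ℂ) (X - C (ζ i)) := by
  have hf0 : f ≠ 0 := hf ▸ (monic_prod_of_monic _ _ fun i _ => monic_X_sub_C (ζ i)).ne_zero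
  have hdvd (i : Fin d) : X - C (ζ i) ∣ f := hf ▸ Finset.dvd_prod_of_mem _ (Finset.mem_univ i)
  obtain ⟨q, r, -, hqr⟩ := div_prod_eq_quo_add_sum_rem_div (RatFunc ℂ) g
    (g := fun i => (X - C (ζ i)) ^ s) (s := Finset.univ)
    (fun i _ => (monic_X_sub_C _).pow s)
    (fun i _ j _ hij => (pairwise_coprime_X_sub_C hζ hij).pow)
  have hmem : algebraMap ℂ[X] (RatFunc ℂ) g / algebraMap ℂ[X] (RatFunc ℂ) f ^ s ∈
      fracDerivSubmodule hf0 ⊔ simpleFractions ζ := by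
    have hfs : algebraMap ℂ[X] (RatFunc ℂ) f ^ s =
        ∏ i, algebraMap ℂ[X] (RatFunc ℂ) ((X - C (ζ i)) ^ s) := by
      rw [← map_pow, hf, ← Finset.prod_pow, map_prod]
    rw [hfs]
    refine hqr ▸ add_mem (mem_sup_left (algebraMap_mem_fracDerivSubmodule hf0 q)) ?_
    refine sum_mem fun i _ => ?_
    rw [algebraMap.coe_pow]
    exact div_X_sub_C_pow_mem_sup hf0 ζ (hdvd i) (r i) s
  obtain ⟨_, ⟨p, k, rfl⟩, y, hy, hsum⟩ := mem_sup.mp hmem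
  obtain ⟨c, rfl⟩ := (mem_span_range_iff_exists_fun ℂ).mp hy
  refine ⟨p, k, c, ?_⟩
  rw [← hsum, fracDeriv]
  simp only [RatFunc.smul_eq_C_mul, div_eq_mul_inv]

/-- Partial fractions modulo derivatives: for `f = ∏ (X − ζᵢ)` with distinct `ζᵢ`, every
`g/f^s` is of the form `h' + ∑ᵢ cᵢ/(X − ζᵢ)`, where `h = p/f^k ∈ ℂ[X]_f` and
`h' = (p'·f^k − p·(f^k)')/f^{2k}` is its derivative. -/
theorem partial_fractions_mod_derivatives
    (d : ℕ) (ζ : Fin d → ℂ) (hζ : Function.Injective ζ)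
    (f : Polynomial ℂ) (hf : f = ∏ i : Fin d, (X - C (ζ i)))
    (g : Polynomial ℂ) (s : ℕ) (hs : 1 ≤ s) :
    ∃ (p : Polynomial ℂ) (k : ℕ) (c : Fin d → ℂ),
      algebraMap (Polynomial ℂ) (RatFunc ℂ) g /
          (algebraMap (Polynomial ℂ) (RatFunc ℂ) f) ^ s =
        algebraMap (Polynomial ℂ) (RatFunc ℂ)
            (derivative p * f ^ k - p * derivative (f ^ k)) /
          (algebraMap (Polynomial ℂ) (RatFunc ℂ) f) ^ (2 * k) +
        ∑ i : Fin d, RatFunc.C (c i) /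
          algebraMap (Polynomial ℂ) (RatFunc ℂ) (X - C (ζ i)) :=
  partial_fractions_mod_derivatives_general d ζ hζ f hf g s
end

section
/- Let f = ∏_{i=1}^d (X − ζᵢ) ∈ ℂ[X] with ζᵢ pairwise distinct. The classes of the differential forms dX/(X − ζᵢ), 1 ≤ i ≤ d, are linearly independent in the quotient Ω_{ℂ[X]_f} / d(ℂ[X]_f); that is, if ∑ᵢ cᵢ/(X − ζᵢ) = h' for some cᵢ ∈ ℂ and h ∈ ℂ[X]_f, then all cᵢ = 0. -/
/-!
Over the common denominator `f = ∏ (X - ζᵢ)` the sum is `g / f` with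
`g = ∑ᵢ cᵢ ∏_{j ≠ i} (X - ζⱼ)`, and `g(ζᵢ) = cᵢ ∏_{j ≠ i} (ζᵢ - ζⱼ)`. So it suffices that
`g` vanishes at every simple root `a` of `f`, i.e. that a derivative `(p / f^k)'` never has a
simple pole. Writing `p = (X - a)^m q` with `q(a) ≠ 0`, the function `p / f^k` has order `m - k`
at `a`; its derivative has order exactly `m - k - 1` if `m ≠ k`, and is regular at `a` if
`m = k`. In neither case is there a simple pole.
-/

open Polynomial Finset Lagrange

section

variable {K : Type*} [Field K]

theorem sum_C_div_X_sub_C_eq_div_nodal {ι : Type*} [DecidableEq ι] (s : Finset ι) (v c : ι → K) :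
    ∑ i ∈ s, RatFunc.C (c i) / algebraMap K[X] (RatFunc K) (X - C (v i)) =
      algebraMap K[X] (RatFunc K) (∑ i ∈ s, C (c i) * nodal (s.erase i) v) /
        algebraMap K[X] (RatFunc K) (nodal s v) := by
  rw [map_sum, sum_div]
  refine sum_congr rfl fun i hi => ?_
  have hinj := RatFunc.algebraMap_injective K
  rw [div_eq_div_iff ((map_ne_zero_iff _ hinj).mpr (X_sub_C_ne_zero _))
      ((map_ne_zero_iff _ hinj).mpr nodal_ne_zero), nodal_eq_mul_nodal_erase hi,
    ← RatFunc.algebraMap_C, ← map_mul, ← map_mul]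
  congr 1; ring

theorem eval_sum_C_mul_nodal_erase {ι : Type*} [DecidableEq ι] {s : Finset ι} (v c : ι → K)
    {i : ι} (hi : i ∈ s) :
    (∑ j ∈ s, C (c j) * nodal (s.erase j) v).eval (v i) =
      c i * (nodal (s.erase i) v).eval (v i) := by
  rw [eval_finsetSum, sum_eq_single_of_mem i hi, eval_mul, eval_C]
  intro j _ hji
  rw [eval_mul, eval_nodal_at_node (mem_erase.mpr ⟨hji.symm, hi⟩), mul_zero]

theorem X_sub_C_mul_derivative_X_sub_C_pow_mul (a : K) (m : ℕ) (q : K[X]) :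
    (X - C a) * derivative ((X - C a) ^ m * q) =
      (X - C a) ^ m * (C (m : K) * q + (X - C a) * derivative q) := by
  rw [derivative_mul, derivative_X_sub_C_pow]
  rcases m with _ | m
  · simp
  · rw [Nat.add_sub_cancel, pow_succ]
    ring

theorem eval_eq_zero_of_X_sub_C_pow_succ_dvd {a : K} {n : ℕ} {S : K[X]}
    (h : (X - C a) ^ (n + 1) ∣ (X - C a) ^ n * S) : S.eval a = 0 := by
  rw [pow_succ, mul_dvd_mul_iff_left (pow_ne_zero n (X_sub_C_ne_zero a))] at h
  exact dvd_iff_isRoot.mp h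

theorem derivative_mul_pow_sub_mul_derivative_pow_mul (p f : K[X]) (k : ℕ) :
    (derivative p * f ^ k - p * derivative (f ^ k)) * f =
      f ^ k * (derivative p * f - C (k : K) * p * derivative f) := by
  rw [derivative_pow]
  rcases k with _ | k
  · simp
  · rw [Nat.add_sub_cancel, pow_succ]
    ring

theorem eval_eq_zero_of_mul_pow_eq_derivative_mul_sub [CharZero K] {a : K} {f u g p : K[X]}
    {k : ℕ} (hf : f = (X - C a) * u) (hu : u.eval a ≠ 0)
    (h : g * f ^ k = derivative p * f - C (k : K) * p * derivative f) : g.eval a = 0 := by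
  set t := X - C a
  have hu0 : u ≠ 0 := fun hu0 => hu (by simp [hu0])
  rcases eq_or_ne p 0 with rfl | hp
  · simp only [derivative_zero, zero_mul, mul_zero, sub_zero, mul_eq_zero] at h
    rcases h with rfl | hfk
    · exact eval_zero
    · exact absurd (pow_eq_zero_iff'.mp hfk).1 (hf ▸ mul_ne_zero (X_sub_C_ne_zero a) hu0)
  obtain ⟨q, hpq, hq⟩ := p.exists_eq_pow_rootMultiplicity_mul_and_not_dvd hp a
  set m := p.rootMultiplicity a
  -- `S = (X - a)^(k + 1 - m) u^(k + 1) (p / f^k)'` as rational functions.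
  set S := C ((m : K) - k) * (q * u) + t * (derivative q * u - C (k : K) * (q * derivative u))
  have hS : S.eval a = ((m : K) - k) * (q.eval a * u.eval a) := by simp [S, t]
  have key : t ^ k * (g * u ^ k) = t ^ m * S := by
    apply mul_left_cancel₀ (X_sub_C_ne_zero a)
    calc t * (t ^ k * (g * u ^ k)) = t * (g * f ^ k) := by rw [hf, mul_pow]; ring
      _ = (t * derivative p) * t * u - C (k : K) * p * t * (u + t * derivative u) := by
        rw [h, hf, derivative_mul, derivative_X_sub_C]; ring
      _ = t * (t ^ m * S) := by
        rw [hpq, X_sub_C_mul_derivative_X_sub_C_pow_mul]; simp only [S, map_sub]; ring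
  rcases lt_or_ge m k with hmk | hkm
  · have hSa :=
      eval_eq_zero_of_X_sub_C_pow_succ_dvd (key ▸ dvd_mul_of_dvd_left (pow_dvd_pow t hmk) _)
    rw [hS] at hSa
    have hqa : q.eval a ≠ 0 := fun hqa => hq (dvd_iff_isRoot.mpr hqa)
    exact absurd hSa (mul_ne_zero (sub_ne_zero.mpr (by exact_mod_cast hmk.ne)) (mul_ne_zero hqa hu))
  · have hdvd : t ^ (k + 1) ∣ t ^ m * S := by
      rcases hkm.eq_or_lt with rfl | hlt
      · refine mul_dvd_mul_left _ (dvd_add ?_ (dvd_mul_right _ _))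
        simp
      · exact dvd_mul_of_dvd_left (pow_dvd_pow t hlt) _
    have hgu := eval_eq_zero_of_X_sub_C_pow_succ_dvd (key ▸ hdvd)
    rw [eval_mul, eval_pow] at hgu
    exact (mul_eq_zero.mp hgu).resolve_right (pow_ne_zero k hu)

end

/-- Linear independence of the classes of `dX/(X − ζᵢ)` modulo exact forms: if
`∑ᵢ cᵢ/(X − ζᵢ) = h'` for some `h = p/f^k ∈ ℂ[X]_f` (with derivative
`h' = (p'·f^k − p·(f^k)')/f^{2k}`), then all `cᵢ = 0`. -/
theorem simple_fractions_independent_mod_derivatives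
    (d : ℕ) (ζ : Fin d → ℂ) (hζ : Function.Injective ζ)
    (f : Polynomial ℂ) (hf : f = ∏ i : Fin d, (X - C (ζ i)))
    (c : Fin d → ℂ) (p : Polynomial ℂ) (k : ℕ)
    (h : ∑ i : Fin d, RatFunc.C (c i) /
          algebraMap (Polynomial ℂ) (RatFunc ℂ) (X - C (ζ i)) =
        algebraMap (Polynomial ℂ) (RatFunc ℂ)
            (derivative p * f ^ k - p * derivative (f ^ k)) /
          (algebraMap (Polynomial ℂ) (RatFunc ℂ) f) ^ (2 * k)) :
    ∀ i, c i = 0 := by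
  intro i
  rw [← nodal_eq] at hf
  have hinj := RatFunc.algebraMap_injective ℂ
  have hf0 : f ≠ 0 := hf ▸ nodal_ne_zero
  have hAf0 := (map_ne_zero_iff _ hinj).mpr hf0
  rw [sum_C_div_X_sub_C_eq_div_nodal, ← hf, div_eq_div_iff hAf0 (pow_ne_zero _ hAf0), ← map_pow,
    ← map_mul, ← map_mul] at h
  set g := ∑ j, C (c j) * nodal (univ.erase j) ζ
  have hg : g * f ^ k = derivative p * f - C (k : ℂ) * p * derivative f := by
    refine mul_left_cancel₀ (pow_ne_zero k hf0) ?_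
    rw [← derivative_mul_pow_sub_mul_derivative_pow_mul, ← hinj h, two_mul, pow_add]
    ring
  have hu : (nodal (univ.erase i) ζ).eval (ζ i) ≠ 0 :=
    eval_nodal_not_at_node fun j hj => hζ.ne (mem_erase.mp hj).1.symm
  have hgi := eval_eq_zero_of_mul_pow_eq_derivative_mul_sub
    (hf.trans (nodal_eq_mul_nodal_erase (mem_univ i))) hu hg
  rw [eval_sum_C_mul_nodal_erase ζ c (mem_univ i)] at hgi
  exact (mul_eq_zero.mp hgi).resolve_right hu
end
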